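/- arXiv:1302.5446 — 5 statements merged into one kernel-verified Lean document; each statement's English description precedes it below -/
import Mathlib

section
/- If a set system C on a set X has VC-dimension at most d, then for any finite subset A of X, the number of distinct traces |{C ∩ A : C ∈ 𝒞}| is at most the sum of binomial coefficients ∑_{i=0}^{d} (|A| choose i). -/
open Set

variable {α : Type*}

/-- The trace of a set system on a set `A`. -/
def trace (𝒞 : Set (Set α)) (A : Set α) : Set (Set α) := {s | ∃ C ∈ 𝒞, s = C ∩ A}

/-- `∑_{i=0}^{d} (n choose i)`. -/
def binLe (n d : ℕ) : ℕ := ∑ i ∈ Finset.range (d + 1), n.choose i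

/-- `𝒞` shatters `A`. -/
def shatters (𝒞 : Set (Set α)) (A : Set α) : Prop := ∀ B ⊆ A, ∃ C ∈ 𝒞, C ∩ A = B

/-- `𝒞` is a `d`-maximum set system. -/
def isMaximum (𝒞 : Set (Set α)) (d : ℕ) : Prop :=
  ∀ A : Set α, A.Finite → (trace 𝒞 A).ncard = binLe A.ncard d

/-- There is a ladder of length `n` for `𝒞`. -/
def hasLadder (𝒞 : Set (Set α)) (n : ℕ) : Prop :=
  ∃ (x : Fin n → α) (B : Fin n → Set α), (∀ j, B j ∈ 𝒞) ∧ ∀ i j, x i ∈ B j ↔ i < j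

/-- Sauer's Lemma. -/
theorem sauer (𝒞 : Set (Set α)) (d : ℕ)
    (hVC : ∀ A : Set α, A.Finite → A.ncard = d + 1 → ¬ shatters 𝒞 A) :
    ∀ A : Set α, A.Finite → (trace 𝒞 A).ncard ≤ binLe A.ncard d := by
  classical
  intro A hA
  set F : Finset α := hA.toFinset with hF
  have hFA : (F : Set α) = A := hA.coe_toFinset
  set 𝒜 : Finset (Finset α) :=
    F.powerset.filter (fun s => (↑s : Set α) ∈ trace 𝒞 A) with h𝒜
  -- trace injects into 𝒜 via coe image
  have htr : trace 𝒞 A ⊆ ↑(𝒜.image (fun s : Finset α => (s : Set α))) := by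
    rintro s ⟨C, hC, rfl⟩
    have hfin : (C ∩ A).Finite := hA.inter_of_right C
    refine Finset.mem_coe.2 (Finset.mem_image.2 ⟨hfin.toFinset, ?_, hfin.coe_toFinset⟩)
    refine Finset.mem_filter.2 ⟨Finset.mem_powerset.2 ?_, ?_⟩
    · intro x hx
      have := (hfin.mem_toFinset).1 hx
      exact (Set.Finite.mem_toFinset hA).2 this.2
    · rw [hfin.coe_toFinset]; exact ⟨C, hC, rfl⟩
  have h1 : (trace 𝒞 A).ncard ≤ 𝒜.card := by
    calc (trace 𝒞 A).ncard ≤ (↑(𝒜.image (fun s : Finset α => (s : Set α))) :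
            Set (Set α)).ncard :=
          Set.ncard_le_ncard htr (Finset.finite_toSet _)
      _ = (𝒜.image (fun s : Finset α => (s : Set α))).card := Set.ncard_coe_finset _
      _ ≤ 𝒜.card := Finset.card_image_le
  -- Pajor
  have h2 : 𝒜.card ≤ 𝒜.shatterer.card := Finset.card_le_card_shatterer 𝒜
  -- every shattered set has card ≤ d and is ⊆ F
  have hsh : ∀ s ∈ 𝒜.shatterer, s ⊆ F ∧ s.card ≤ d := by
    intro s hs
    rw [Finset.mem_shatterer] at hs
    have hsF : s ⊆ F := by
      obtain ⟨t, ht, hst⟩ := hs.exists_superset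
      exact hst.trans (Finset.mem_powerset.1 (Finset.mem_filter.1 ht).1)
    refine ⟨hsF, ?_⟩
    by_contra hcard
    push_neg at hcard
    obtain ⟨t, hts, htc⟩ := Finset.exists_subset_card_eq hcard
    have hshat : 𝒜.Shatters t := hs.mono_right hts
    refine hVC (↑t) (Finset.finite_toSet t) (by simp [Set.ncard_coe_finset, htc]) ?_
    intro B hB
    have hBfin : B.Finite := (Finset.finite_toSet t).subset hB
    obtain ⟨b, hbB⟩ : ∃ b : Finset α, (↑b : Set α) = B :=
      ⟨hBfin.toFinset, hBfin.coe_toFinset⟩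
    have hbt : b ⊆ t := by
      intro x hx
      have : x ∈ B := by rw [← hbB]; exact_mod_cast hx
      exact_mod_cast hB this
    obtain ⟨u, hu, htu⟩ := hshat hbt
    obtain ⟨C, hC, huC⟩ := (Finset.mem_filter.1 hu).2
    refine ⟨C, hC, ?_⟩
    have htA : (↑t : Set α) ⊆ A := by
      rw [← hFA]; exact_mod_cast hts.trans hsF
    calc C ∩ ↑t = (C ∩ A) ∩ ↑t := by
          rw [Set.inter_assoc, Set.inter_eq_right.2 htA]
      _ = (↑u : Set α) ∩ ↑t := by rw [← huC]
      _ = ↑(t ∩ u) := by push_cast; rw [Set.inter_comm]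
      _ = B := by rw [htu, hbB]
  -- shatterer ⊆ biUnion of powersetCard
  have h3 : 𝒜.shatterer ⊆ (Finset.range (d+1)).biUnion (fun k => Finset.powersetCard k F) := by
    intro s hs
    obtain ⟨hsF, hsd⟩ := hsh s hs
    exact Finset.mem_biUnion.2 ⟨s.card, Finset.mem_range.2 (Nat.lt_succ_of_le hsd),
      Finset.mem_powersetCard.2 ⟨hsF, rfl⟩⟩
  have h4 : 𝒜.shatterer.card ≤ binLe A.ncard d := by
    calc 𝒜.shatterer.card ≤ ((Finset.range (d+1)).biUnion
            (fun k => Finset.powersetCard k F)).card := Finset.card_le_card h3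
      _ ≤ ∑ k ∈ Finset.range (d+1), (Finset.powersetCard k F).card := Finset.card_biUnion_le
      _ = binLe A.ncard d := by
          unfold binLe
          refine Finset.sum_congr rfl fun k _ => ?_
          rw [Finset.card_powersetCard, ← Set.ncard_coe_finset, hFA]
  omega
end

section
/- Let X be a finite set and 𝒞 ⊆ 𝒫(X) a d-maximum set system with |X| ≥ d+1. For each A ⊆ X with |A| = d+1, let C_A denote the forbidden label of 𝒞 on A. Then for every B ⊆ X: B ∈ 𝒞 if and only if for every A ⊆ X with |A| = d+1, B ∩ A ≠ C_A. -/
open Set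

variable {α : Type*}

/-!
A `d`-maximum class `𝒞` on `X` has exactly `∑_{i ≤ d} (|X| choose i)` members. The class `𝒟` of
all sets avoiding every forbidden label contains `𝒞`, and it shatters no `(d+1)`-set `A` since
it misses the label `C_A` there; so by the Sauer–Shelah lemma `𝒟` has at most as many members
as `𝒞`, whence `𝒞 = 𝒟`.
-/

theorem trace_univ (𝒞 : Set (Set α)) : trace 𝒞 univ = 𝒞 := by
  ext s
  simp [trace]

theorem isMaximum.ncard_eq [Finite α] {𝒞 : Set (Set α)} {d : ℕ} (h : isMaximum 𝒞 d) :
    𝒞.ncard = binLe (Nat.card α) d := by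
  simpa [trace_univ, ncard_univ] using h univ finite_univ

theorem binLe_eq_sum_Iic (n d : ℕ) : binLe n d = ∑ i ∈ Finset.Iic d, n.choose i := by
  rw [binLe, Nat.range_succ_eq_Iic]

section Fintype

variable [Fintype α]

open scoped Classical in
theorem ncard_eq_card_filter_coe_mem (𝒟 : Set (Set α)) :
    𝒟.ncard = (Finset.univ.filter fun s : Finset α => (s : Set α) ∈ 𝒟).card := by
  have hrange : 𝒟 ⊆ range ((↑) : Finset α → Set α) :=
    fun B _ => ⟨B.toFinite.toFinset, B.toFinite.coe_toFinset⟩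
  rw [← ncard_preimage_of_injective_subset_range Finset.coe_injective hrange,
    ← ncard_coe_finset, Finset.coe_filter]
  simp only [Finset.mem_univ, true_and]
  rfl

open scoped Classical in
theorem shatters_coe_of_shatters {𝒟 : Set (Set α)} {t : Finset α}
    (h : (Finset.univ.filter fun s : Finset α => (s : Set α) ∈ 𝒟).Shatters t) :
    shatters 𝒟 t := by
  intro B hB
  have hBt : B.toFinset ⊆ t := by simpa using hB
  obtain ⟨u, hu, hut⟩ := h hBt
  refine ⟨u, by simpa using hu, ?_⟩
  rw [← Finset.coe_inter, Finset.inter_comm, hut, coe_toFinset]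

theorem ncard_le_binLe_of_not_shatters {𝒟 : Set (Set α)} {d : ℕ}
    (h : ∀ A : Set α, A.ncard = d + 1 → ¬ shatters 𝒟 A) :
    𝒟.ncard ≤ binLe (Fintype.card α) d := by
  classical
  set 𝒜 := Finset.univ.filter fun s : Finset α => (s : Set α) ∈ 𝒟
  have hvc : 𝒜.vcDim ≤ d := by
    refine Finset.sup_le fun s hs => ?_
    by_contra! hds
    obtain ⟨t, hts, htd⟩ := Finset.exists_subset_card_eq hds
    exact h t (by rw [ncard_coe_finset, htd])
      (shatters_coe_of_shatters ((Finset.mem_shatterer.1 hs).mono_right hts))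
  calc 𝒟.ncard = 𝒜.card := ncard_eq_card_filter_coe_mem 𝒟
    _ ≤ 𝒜.shatterer.card := Finset.card_le_card_shatterer 𝒜
    _ ≤ ∑ i ∈ Finset.Iic 𝒜.vcDim, (Fintype.card α).choose i :=
      Finset.card_shatterer_le_sum_vcDim
    _ ≤ binLe (Fintype.card α) d := by
      rw [binLe_eq_sum_Iic]
      exact Finset.sum_le_sum_of_subset (Finset.Iic_subset_Iic.2 hvc)

end Fintype

theorem not_shatters_setOf_forall_inter_ne {d : ℕ} {Cf : Set α → Set α} {A : Set α}
    (hA : A.ncard = d + 1) (hCfA : Cf A ⊆ A) :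
    ¬ shatters {B | ∀ A : Set α, A.ncard = d + 1 → B ∩ A ≠ Cf A} A := fun hsh =>
  let ⟨_, hC, hCA⟩ := hsh (Cf A) hCfA
  hC A hA hCA

theorem floyd_forbidden_labels_general [Fintype α] (𝒞 : Set (Set α)) (d : ℕ)
    (hmax : isMaximum 𝒞 d)
    (Cf : Set α → Set α)
    (hCf : ∀ A : Set α, A.ncard = d + 1 → Cf A ⊆ A ∧ Cf A ∉ trace 𝒞 A) :
    ∀ B : Set α, B ∈ 𝒞 ↔ ∀ A : Set α, A.ncard = d + 1 → B ∩ A ≠ Cf A := by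
  set 𝒟 : Set (Set α) := {B | ∀ A : Set α, A.ncard = d + 1 → B ∩ A ≠ Cf A}
  have hsub : 𝒞 ⊆ 𝒟 := fun B hB A hA hBA => (hCf A hA).2 ⟨B, hB, hBA.symm⟩
  have hcard : 𝒟.ncard ≤ 𝒞.ncard := by
    rw [hmax.ncard_eq, Nat.card_eq_fintype_card]
    exact ncard_le_binLe_of_not_shatters fun A hA =>
      not_shatters_setOf_forall_inter_ne hA (hCf A hA).1
  have heq : 𝒞 = 𝒟 := eq_of_subset_of_ncard_le hsub hcard (toFinite 𝒟)
  exact fun B => heq ▸ Iff.rfl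

/-- Floyd's characterization of a maximum class by its forbidden labels. -/
theorem floyd_forbidden_labels [Fintype α] (𝒞 : Set (Set α)) (d : ℕ)
    (hmax : isMaximum 𝒞 d) (hbig : d + 1 ≤ Fintype.card α)
    (Cf : Set α → Set α)
    (hCf : ∀ A : Set α, A.ncard = d + 1 → Cf A ⊆ A ∧ Cf A ∉ trace 𝒞 A) :
    ∀ B : Set α, B ∈ 𝒞 ↔ ∀ A : Set α, A.ncard = d + 1 → B ∩ A ≠ Cf A :=
  floyd_forbidden_labels_general 𝒞 d hmax Cf hCf
end

section
/- Let X be a finite linearly ordered set, η ∈ {0,1}^{d+1} a binary string of length d+1, and let 𝒞 be the collection of all subsets B ⊆ X such that there do not exist elements a_0 < a_1 < ⋯ < a_d in X with a_i ∈ B ⟺ η(i) = 1 for all i. Then 𝒞 is d-maximum on X, i.e., for every subset A ⊆ X, |{C ∩ A : C ∈ 𝒞}| = ∑_{i=0}^{min(d,|A|)} (|A| choose i). -/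
open Set

variable {α : Type*}

/-- `B` induces the binary string `μ`. -/
def induces [LinearOrder α] (B : Set α) {m : ℕ} (μ : Fin m → Bool) : Prop :=
  ∃ x : Fin m → α, StrictMono x ∧ ∀ j, x j ∈ B ↔ μ j = true

/-!
A set avoiding `η` inside `A` extends, one point `x` at a time, to a set avoiding `η`
everywhere: if both `x ∉ D` and `x ∈ D` produced an occurrence of `η`, the two witnesses would
pass through `x` at a `0`-position and at a `1`-position respectively, and splicing them at `x`
yields an occurrence inside the old ground set. So the trace on `A` consists of the subsets of
`A` avoiding `η` inside `A`. Removing the maximum of `A` then gives the Pascal recursion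
`f(n, η) = f(n - 1, η) + f(n - 1, η without its last bit)`, solved by `∑_{i ≤ d} (n choose i)`.
-/

open Finset in
theorem Nat.sum_range_succ_choose_succ (n m : ℕ) :
    ∑ i ∈ range (m + 1), (n + 1).choose i
      = ∑ i ∈ range (m + 1), n.choose i + ∑ i ∈ range m, n.choose i := by
  simp only [sum_range_succ' _ m, Nat.choose_succ_succ, sum_add_distrib, Nat.choose_zero_right]
  ring

theorem Fin.strictMono_snoc {β : Type*} [Preorder β] {m : ℕ} {y : Fin m → β} {a : β}
    (hy : StrictMono y) (ha : ∀ j, y j < a) : StrictMono (Fin.snoc y a : Fin (m + 1) → β) := by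
  intro i j hij
  induction j using Fin.lastCases with
  | last =>
    induction i using Fin.lastCases with
    | last => exact absurd hij (lt_irrefl _)
    | cast i => simpa using ha i
  | cast j =>
    induction i using Fin.lastCases with
    | last => exact absurd hij (not_lt.2 (Fin.le_last _))
    | cast i => simpa using hy (Fin.castSucc_lt_castSucc_iff.1 hij)

theorem Set.ncard_eq_add_of_forall_subset_insert {A : Set α} {a : α} (hA : A.Finite) (ha : a ∉ A)
    {F : Set (Set α)} (hF : ∀ S ∈ F, S ⊆ insert a A) :
    F.ncard = {S | S ⊆ A ∧ S ∈ F}.ncard + {S | S ⊆ A ∧ insert a S ∈ F}.ncard := by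
  have hsplit : F = {S | S ⊆ A ∧ S ∈ F} ∪ insert a '' {S | S ⊆ A ∧ insert a S ∈ F} := by
    ext S
    refine ⟨fun hS => ?_, ?_⟩
    · by_cases haS : a ∈ S
      · refine Or.inr ⟨S \ {a}, ⟨sdiff_singleton_subset_iff.2 (hF S hS), ?_⟩,
          insert_sdiff_self_of_mem haS⟩
        rwa [insert_sdiff_self_of_mem haS]
      · exact Or.inl ⟨(subset_insert_iff_of_notMem haS).1 (hF S hS), hS⟩
    · rintro (⟨-, hS⟩ | ⟨T, ⟨-, hT⟩, rfl⟩) <;> assumption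
  have hfin : ∀ P : Set α → Prop, {S | S ⊆ A ∧ P S}.Finite := fun P =>
    hA.finite_subsets.subset fun S hS => hS.1
  have hinj : InjOn (insert a) {S | S ⊆ A ∧ insert a S ∈ F} :=
    insert_erase_invOn.2.injOn.mono fun S hS haS => ha (hS.1 haS)
  have hdisj : Disjoint {S | S ⊆ A ∧ S ∈ F} (insert a '' {S | S ⊆ A ∧ insert a S ∈ F}) := by
    rw [disjoint_right]
    rintro _ ⟨T, -, rfl⟩ hT
    exact ha (hT.1 (mem_insert a T))
  nth_rw 1 [hsplit]
  rw [ncard_union_eq hdisj (hfin _) ((hfin _).image _), hinj.ncard_image]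

section Induces

variable [LinearOrder α] {m : ℕ}

def inducesIn (B A : Set α) (μ : Fin m → Bool) : Prop :=
  ∃ x : Fin m → α, StrictMono x ∧ (∀ j, x j ∈ A) ∧ ∀ j, x j ∈ B ↔ μ j = true

def avoidersIn (A : Set α) (μ : Fin m → Bool) : Set (Set α) :=
  {S | S ⊆ A ∧ ¬ inducesIn S A μ}

theorem inducesIn_fin_zero (B A : Set α) (μ : Fin 0 → Bool) : inducesIn B A μ :=
  ⟨Fin.elim0, fun i => i.elim0, fun i => i.elim0, fun i => i.elim0⟩

theorem inducesIn.mono {B A A' : Set α} {μ : Fin m → Bool} (h : inducesIn B A μ) (hA : A ⊆ A') :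
    inducesIn B A' μ :=
  let ⟨x, hx, hxA, hxB⟩ := h
  ⟨x, hx, fun j => hA (hxA j), hxB⟩

theorem inducesIn_univ {B : Set α} {μ : Fin m → Bool} : inducesIn B univ μ ↔ induces B μ :=
  ⟨fun ⟨x, hx, _, hxB⟩ => ⟨x, hx, hxB⟩, fun ⟨x, hx, hxB⟩ => ⟨x, hx, fun _ => trivial, hxB⟩⟩

theorem inducesIn_congr {B B' A : Set α} {μ : Fin m → Bool} (h : ∀ y ∈ A, y ∈ B ↔ y ∈ B') :
    inducesIn B A μ ↔ inducesIn B' A μ :=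
  exists_congr fun x => and_congr_right fun _ => and_congr_right fun hxA =>
    forall_congr' fun j => by rw [h _ (hxA j)]

/-- Two increasing sequences passing through `x` at different positions can be spliced at `x`
into an increasing sequence avoiding `x`, taking each term from one of them. -/
theorem exists_strictMono_splice {u v : Fin m → α} (hu : StrictMono u) (hv : StrictMono v)
    {x : α} {i j : Fin m} (hi : u i = x) (hj : v j = x) (hij : i ≠ j) {P : Fin m → α → Prop}
    (hPu : ∀ k, u k ≠ x → P k (u k)) (hPv : ∀ k, v k ≠ x → P k (v k)) :
    ∃ w : Fin m → α, StrictMono w ∧ ∀ k, P k (w k) := by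
  wlog hlt : i < j generalizing u v i j
  · exact this hv hu hj hi hij.symm hPv hPu (lt_of_le_of_ne (not_lt.1 hlt) hij.symm)
  have hv_lt : ∀ k < j, v k < x := fun k hk => hj ▸ hv hk
  have hu_gt : ∀ k, j ≤ k → x < u k := fun k hk => hi ▸ hu (hlt.trans_le hk)
  refine ⟨fun k => if k < j then v k else u k, fun k₁ k₂ h => ?_, fun k => ?_⟩
  · dsimp only
    split_ifs with h₁ h₂ h₂
    · exact hv h
    · exact (hv_lt k₁ h₁).trans (hu_gt k₂ (not_lt.1 h₂))
    · exact absurd (h.trans h₂) h₁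
    · exact hu h
  · dsimp only
    split_ifs with hk
    · exact hPv k (hv_lt k hk).ne
    · exact hPu k (hu_gt k (not_lt.1 hk)).ne'

theorem inducesIn_of_inducesIn_insert {A B : Set α} {x : α} {μ : Fin m → Bool}
    (h₀ : inducesIn (B \ {x}) (insert x A) μ) (h₁ : inducesIn (insert x B) (insert x A) μ) :
    inducesIn B A μ := by
  obtain ⟨u, hu, huA, huB⟩ := h₀
  obtain ⟨v, hv, hvA, hvB⟩ := h₁
  suffices ∃ w : Fin m → α, StrictMono w ∧ ∀ k, w k ∈ A ∧ (w k ∈ B ↔ μ k = true) from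
    let ⟨w, hw, hwP⟩ := this
    ⟨w, hw, fun k => (hwP k).1, fun k => (hwP k).2⟩
  have hPu : ∀ k, u k ≠ x → u k ∈ A ∧ (u k ∈ B ↔ μ k = true) := fun k hk =>
    ⟨(huA k).resolve_left hk, by simpa [hk] using huB k⟩
  have hPv : ∀ k, v k ≠ x → v k ∈ A ∧ (v k ∈ B ↔ μ k = true) := fun k hk =>
    ⟨(hvA k).resolve_left hk, by simpa [hk] using hvB k⟩
  by_cases hux : ∀ k, u k ≠ x
  · exact ⟨u, hu, fun k => hPu k (hux k)⟩
  by_cases hvx : ∀ k, v k ≠ x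
  · exact ⟨v, hv, fun k => hPv k (hvx k)⟩
  push Not at hux hvx
  obtain ⟨i, hi⟩ := hux
  obtain ⟨j, hj⟩ := hvx
  have hμi : μ i = false := by simpa [hi] using huB i
  have hμj : μ j = true := by simpa [hj] using hvB j
  exact exists_strictMono_splice (P := fun k y => y ∈ A ∧ (y ∈ B ↔ μ k = true)) hu hv hi hj
    (fun h => by simp_all) hPu hPv

theorem exists_inter_eq_not_inducesIn_union {A B : Set α} {μ : Fin m → Bool}
    (h : ¬ inducesIn B A μ) (s : Finset α) :
    ∃ D : Set α, D ∩ A = B ∩ A ∧ ¬ inducesIn D (A ∪ s) μ := by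
  classical
  induction s using Finset.induction_on with
  | empty => exact ⟨B, rfl, by simpa using h⟩
  | @insert x s _ ih =>
    obtain ⟨D, hDA, hD⟩ := ih
    rw [Finset.coe_insert, union_insert]
    by_cases hxA : x ∈ A
    · exact ⟨D, hDA, by rwa [insert_eq_of_mem (mem_union_left _ hxA)]⟩
    by_contra! hcon
    refine hD (inducesIn_of_inducesIn_insert (hcon _ ?_) (hcon _ ?_))
    · rw [← inter_sdiff_right_comm, hDA, sdiff_singleton_eq_self (fun h => hxA h.2)]
    · rw [insert_inter_of_notMem hxA, hDA]

theorem trace_avoiders_eq_avoidersIn [Fintype α] (μ : Fin m → Bool) (A : Set α) :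
    trace {B | ¬ induces B μ} A = avoidersIn A μ := by
  ext S
  constructor
  · rintro ⟨C, hC, rfl⟩
    refine ⟨inter_subset_right, fun hS => hC ?_⟩
    rw [← inducesIn_univ]
    exact ((inducesIn_congr fun y hy => by simp [hy]).1 hS).mono (subset_univ A)
  · rintro ⟨hSA, hS⟩
    obtain ⟨D, hDA, hD⟩ := exists_inter_eq_not_inducesIn_union hS Finset.univ
    refine ⟨D, fun hD' => hD ?_, by rw [hDA, inter_eq_left.2 hSA]⟩
    simpa using inducesIn_univ.2 hD'

theorem StrictMono.apply_castSucc_lt {x : Fin (m + 1) → α} (hx : StrictMono x) {A : Set α}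
    {a : α} (hA : ∀ y ∈ A, y < a) (hxA : ∀ j, x j ∈ insert a A) (j : Fin m) : x j.castSucc < a :=
  (hx (Fin.castSucc_lt_last j)).trans_le <|
    (hxA _).elim le_of_eq fun h => (hA _ h).le

theorem inducesIn_insert_iff_init {A B : Set α} {a : α} (hA : ∀ y ∈ A, y < a)
    {μ : Fin (m + 1) → Bool} (ha : a ∈ B ↔ μ (Fin.last m) = true) :
    inducesIn B (insert a A) μ ↔ inducesIn B A (Fin.init μ) := by
  constructor
  · rintro ⟨x, hx, hxA, hxB⟩
    refine ⟨x ∘ Fin.castSucc, hx.comp Fin.strictMono_castSucc, fun j => ?_, fun j => hxB _⟩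
    exact (hxA _).resolve_left (hx.apply_castSucc_lt hA hxA j).ne
  · rintro ⟨y, hy, hyA, hyB⟩
    refine ⟨Fin.snoc y a, Fin.strictMono_snoc hy fun j => hA _ (hyA j), fun j => ?_, fun j => ?_⟩
    · induction j using Fin.lastCases <;> simp [hyA]
    · induction j using Fin.lastCases <;> simp [ha, hyB, Fin.init]

theorem inducesIn_insert_iff {A B : Set α} {a : α} (hA : ∀ y ∈ A, y < a)
    {μ : Fin (m + 1) → Bool} (ha : ¬ (a ∈ B ↔ μ (Fin.last m) = true)) :
    inducesIn B (insert a A) μ ↔ inducesIn B A μ := by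
  refine ⟨fun ⟨x, hx, hxA, hxB⟩ => ⟨x, hx, fun j => (hxA j).resolve_left fun hj => ?_, hxB⟩,
    fun h => h.mono (subset_insert a A)⟩
  induction j using Fin.lastCases with
  | last => exact ha (hj ▸ hxB _)
  | cast j => exact (hx.apply_castSucc_lt hA hxA j).ne hj

theorem avoidersIn_fin_zero (A : Set α) (μ : Fin 0 → Bool) : avoidersIn A μ = ∅ :=
  eq_empty_of_forall_notMem fun _ hS => hS.2 (inducesIn_fin_zero _ _ μ)

theorem ncard_avoidersIn_insert {A : Set α} (hA_fin : A.Finite) {a : α} (hA : ∀ y ∈ A, y < a)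
    (μ : Fin (m + 1) → Bool) :
    (avoidersIn (insert a A) μ).ncard
      = (avoidersIn A μ).ncard + (avoidersIn A (Fin.init μ)).ncard := by
  have ha : a ∉ A := fun h => lt_irrefl a (hA a h)
  have h₀ : ∀ {k} (ν : Fin k → Bool), (∀ S ⊆ A, inducesIn S (insert a A) μ ↔ inducesIn S A ν) →
      {S | S ⊆ A ∧ S ∈ avoidersIn (insert a A) μ} = avoidersIn A ν := fun ν hν => by
    ext S
    refine and_congr_right fun hS => ?_
    simp [avoidersIn, hν S hS, hS.trans (subset_insert a A)]
  have h₁ : ∀ {k} (ν : Fin k → Bool),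
      (∀ S ⊆ A, inducesIn (insert a S) (insert a A) μ ↔ inducesIn S A ν) →
      {S | S ⊆ A ∧ insert a S ∈ avoidersIn (insert a A) μ} = avoidersIn A ν := fun ν hν => by
    ext S
    refine and_congr_right fun hS => ?_
    simp [avoidersIn, hν S hS, insert_subset_insert hS]
  have hins : ∀ {k} (ν : Fin k → Bool) (S : Set α), inducesIn (insert a S) A ν ↔ inducesIn S A ν :=
    fun _ _ => inducesIn_congr fun y hy => by simp [(hA y hy).ne]
  rw [Set.ncard_eq_add_of_forall_subset_insert hA_fin ha fun S hS => hS.1]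
  cases hμ : μ (Fin.last m)
  · rw [add_comm, h₀ (Fin.init μ), h₁ μ]
    · exact fun S _ => by rw [inducesIn_insert_iff hA (by simp [hμ]), hins]
    · exact fun S hS => inducesIn_insert_iff_init hA (by simp [hμ, notMem_subset hS ha])
  · rw [h₀ μ, h₁ (Fin.init μ)]
    · exact fun S _ => by rw [inducesIn_insert_iff_init hA (by simp [hμ]), hins]
    · exact fun S hS => inducesIn_insert_iff hA (by simp [hμ, notMem_subset hS ha])

open Finset in
theorem ncard_avoidersIn (s : Finset α) (μ : Fin m → Bool) :
    (avoidersIn (s : Set α) μ).ncard = ∑ i ∈ range m, s.card.choose i := by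
  induction s using Finset.induction_on_max generalizing m with
  | empty =>
    rcases m with _ | m
    · simp [avoidersIn_fin_zero]
    · have : avoidersIn (∅ : Set α) μ = {∅} := by
        ext S
        simp [avoidersIn, inducesIn]
      simp [this, sum_range_succ']
  | insert a s ha ih =>
    rcases m with _ | m
    · simp [avoidersIn_fin_zero]
    · rw [coe_insert, ncard_avoidersIn_insert s.finite_toSet ha, ih, ih,
        card_insert_of_notMem fun h => lt_irrefl a (ha a h), Nat.sum_range_succ_choose_succ]

end Induces

/-- On a finite linear order, the family of sets avoiding a fixed pattern
`η ∈ 2^{d+1}` is `d`-maximum. -/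
theorem avoiders_isMaximum [LinearOrder α] [Fintype α] (d : ℕ) (η : Fin (d + 1) → Bool) :
    ∀ A : Set α, (trace {B : Set α | ¬ induces B η} A).ncard = binLe A.ncard d := by
  intro A
  classical
  rw [trace_avoiders_eq_avoidersIn, ← A.coe_toFinset, ncard_avoidersIn, ncard_coe_finset]
  rfl
end

section
/- Let 𝒞 ⊆ 𝒫(X) be a set system whose one-inclusion graph is connected with graph distance equal to Hamming distance, and suppose 𝒞 has ladder dimension at most n. Then for any C₁, C₂ ∈ 𝒞, |C₁ \ C₂| ≤ n. -/
open Set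

variable {α : Type*}

/-- The one-inclusion graph of a set system. -/
def oneInclusionGraph (𝒞 : Set (Set α)) : SimpleGraph 𝒞 where
  Adj C₁ C₂ := (symmDiff (C₁ : Set α) (C₂ : Set α)).ncard = 1
  symm := by
    constructor
    intro C₁ C₂ h
    rwa [symmDiff_comm]
  loopless := by
    constructor
    intro C h
    simp [symmDiff_self] at h

/-! Along a shortest walk from `C₂` to `C₁` in the one-inclusion graph the Hamming distance to `C₁`
drops by one at each step, so every step flips one element of `C₂ ∆ C₁` towards `C₁`, never to be
flipped back. The set just before an element of `C₁ \ C₂` is added therefore contains the elements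
added earlier and none of those added later: the elements of `C₁ \ C₂`, each paired with that set,
form a ladder. -/

open scoped symmDiff

def IsLadder {k : ℕ} (x : Fin k → α) (B : Fin k → Set α) : Prop :=
  ∀ i j, x i ∈ B j ↔ i < j

theorem IsLadder.cons {k : ℕ} {x : Fin k → α} {B : Fin k → Set α} (h : IsLadder x B)
    {z : α} {A : Set α} (hzA : z ∉ A) (hzB : ∀ j, z ∈ B j) (hxA : ∀ i, x i ∉ A) :
    IsLadder (Fin.cons z x : Fin (k + 1) → α) (Fin.cons A B) := by
  intro i j
  cases i using Fin.cases <;> cases j using Fin.cases <;>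
    simp [hzA, hzB, hxA, h _ _, Fin.succ_pos]

theorem Set.ncard_symmDiff_le_add [Finite α] (s t u : Set α) :
    (s ∆ u).ncard ≤ (s ∆ t).ncard + (t ∆ u).ncard :=
  (ncard_le_ncard (symmDiff_triangle s t u)).trans (ncard_union_le _ _)

namespace oneInclusionGraph

variable {𝒞 : Set (Set α)}

theorem exists_eq_symmDiff_singleton_of_adj {u w : 𝒞} (h : (oneInclusionGraph 𝒞).Adj u w) :
    ∃ z, (w : Set α) = (u : Set α) ∆ {z} := by
  obtain ⟨z, hz⟩ := ncard_eq_one.mp h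
  exact ⟨z, by rw [← hz, symmDiff_symmDiff_cancel_left]⟩

theorem ncard_symmDiff_le_succ_of_adj [Finite α] {u w : 𝒞} (h : (oneInclusionGraph 𝒞).Adj u w)
    (v : Set α) : ((u : Set α) ∆ v).ncard ≤ ((w : Set α) ∆ v).ncard + 1 := by
  have hadj : ((u : Set α) ∆ w).ncard = 1 := h
  have := ncard_symmDiff_le_add (u : Set α) w v
  omega

theorem ncard_symmDiff_le_length [Finite α] {u v : 𝒞} (p : (oneInclusionGraph 𝒞).Walk u v) :
    ((u : Set α) ∆ v).ncard ≤ p.length := by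
  induction p with
  | nil => simp
  | @cons u w v h q ih =>
    rw [SimpleGraph.Walk.length_cons]
    exact (ncard_symmDiff_le_succ_of_adj h v).trans (by omega)

theorem mem_symmDiff_of_length_lt [Finite α] {u w v : 𝒞} {z : α}
    (hw : (w : Set α) = (u : Set α) ∆ {z}) (q : (oneInclusionGraph 𝒞).Walk w v)
    (hq : q.length < ((u : Set α) ∆ v).ncard) :
    z ∈ (u : Set α) ∆ v := by
  by_contra hz
  have hwv : (w : Set α) ∆ v = insert z ((u : Set α) ∆ v) := by
    rw [hw, symmDiff_right_comm]
    ext x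
    by_cases hx : x = z <;> simp [mem_symmDiff, hx, hz]
  have := ncard_symmDiff_le_length q
  rw [hwv, ncard_insert_of_notMem hz] at this
  omega

-- The bound `u ∩ v ⊆ B j` is what lets the element added by the first step be prepended.
theorem exists_ladder_of_length_le [Finite α] {u v : 𝒞} (p : (oneInclusionGraph 𝒞).Walk u v)
    (hp : p.length ≤ ((u : Set α) ∆ v).ncard) {k : ℕ}
    (hk : k ≤ ((v : Set α) \ u).ncard) :
    ∃ (x : Fin k → α) (B : Fin k → Set α), (∀ j, B j ∈ 𝒞) ∧ (∀ j, (u : Set α) ∩ v ⊆ B j) ∧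
      (∀ i, x i ∈ (v : Set α) \ u) ∧ IsLadder x B := by
  induction p generalizing k with
  | nil =>
    obtain rfl : k = 0 := by simpa using hk
    exact ⟨finZeroElim, finZeroElim, finZeroElim, finZeroElim, finZeroElim, finZeroElim⟩
  | @cons u w v h q ih =>
    obtain ⟨z, hw⟩ := exists_eq_symmDiff_singleton_of_adj h
    rw [SimpleGraph.Walk.length_cons] at hp
    have hq : q.length ≤ ((w : Set α) ∆ v).ncard := by
      have := ncard_symmDiff_le_succ_of_adj h v
      omega
    rcases mem_symmDiff.mp (mem_symmDiff_of_length_lt hw q (by omega)) with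
      ⟨hzu, hzv⟩ | ⟨hzv, hzu⟩
    · have hvw : (v : Set α) \ w = (v : Set α) \ u := by
        ext x; by_cases hx : x = z <;> simp [hw, mem_symmDiff, hx, hzv]
      have hwv : (w : Set α) ∩ v = (u : Set α) ∩ v := by
        ext x; by_cases hx : x = z <;> simp [hw, mem_symmDiff, hx, hzv]
      simpa only [hvw, hwv] using ih hq (hvw ▸ hk)
    · obtain _ | k := k
      · exact ⟨finZeroElim, finZeroElim, finZeroElim, finZeroElim, finZeroElim, finZeroElim⟩
      have huw : (u : Set α) ⊆ w := by
        intro x hx; by_cases hx' : x = z <;> simp_all [mem_symmDiff]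
      have hzw : z ∈ (w : Set α) := by simp [hw, mem_symmDiff, hzu]
      have hvw : (v : Set α) \ w = ((v : Set α) \ u) \ {z} := by
        ext x; by_cases hx : x = z <;> simp [hw, mem_symmDiff, hx, hzv, hzu]
      obtain ⟨x, B, hB, hBw, hxw, hl⟩ := ih hq (k := k) (by
        rw [hvw, ← Nat.add_one_le_add_one_iff, 
          ncard_sdiff_singleton_add_one (show z ∈ (v : Set α) \ u from ⟨hzv, hzu⟩)]
        exact hk)
      refine ⟨Fin.cons z x, Fin.cons (u : Set α) B, Fin.cases u.2 hB,
        Fin.cases inter_subset_left fun j ↦ (inter_subset_inter_left _ huw).trans (hBw j),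
        Fin.cases ⟨hzv, hzu⟩ fun i ↦ sdiff_subset_sdiff_right huw (hxw i),
        hl.cons hzu (fun j ↦ hBw j ⟨hzw, hzv⟩) fun i hi ↦ (hxw i).2 (huw hi)⟩

end oneInclusionGraph

/-- If the one-inclusion graph is connected with graph distance equal to Hamming
distance, and ladder dimension is at most `n`, then set differences are at most `n`. -/
theorem diff_card_le_of_ladder [Fintype α] (𝒞 : Set (Set α)) (n : ℕ)
    (hconn : ∀ C₁ C₂ : 𝒞, (oneInclusionGraph 𝒞).Reachable C₁ C₂)
    (hdist : ∀ C₁ C₂ : 𝒞,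
      (oneInclusionGraph 𝒞).dist C₁ C₂ = (symmDiff (C₁ : Set α) (C₂ : Set α)).ncard)
    (hLD : ¬ hasLadder 𝒞 (n + 1)) :
    ∀ C₁ ∈ 𝒞, ∀ C₂ ∈ 𝒞, (C₁ \ C₂).ncard ≤ n := by
  intro C₁ h₁ C₂ h₂
  by_contra! hgt
  obtain ⟨p, hp⟩ := (hconn ⟨C₂, h₂⟩ ⟨C₁, h₁⟩).exists_walk_length_eq_dist
  obtain ⟨x, B, hB, -, -, hl⟩ :=
    oneInclusionGraph.exists_ladder_of_length_le p (by rw [hp, hdist]) hgt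
  exact hLD ⟨x, B, hB, hl⟩
end

section
/- A set system of the form 𝒞 ⊆ {S Δ B : |S| ≤ m} (for fixed m ∈ ℕ and B ⊆ X) is stable, i.e., has ladder dimension at most a bound depending only on m; concretely, LD(𝒞) ≤ 2m + 1. -/
open Set

variable {α : Type*}

/-- A family of bounded symmetric-difference perturbations of a fixed set is stable,
with ladder dimension at most `2m + 1`. -/
theorem symmDiff_small_stable (𝒞 : Set (Set α)) (B : Set α) (m : ℕ)
    (h𝒞 : ∀ C ∈ 𝒞, ∃ S : Set α, S.encard ≤ (m : ℕ∞) ∧ C = symmDiff S B) :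
    ¬ hasLadder 𝒞 (2 * m + 2) := by
  rintro ⟨x, Bf, hB, hlad⟩
  obtain ⟨S₀, hS₀, hC₀⟩ := h𝒞 _ (hB ⟨0, by omega⟩)
  obtain ⟨S₁, hS₁, hC₁⟩ := h𝒞 _ (hB ⟨2 * m + 1, by omega⟩)
  set f : Fin (2 * m + 1) → α := fun i => x ⟨i.1, by omega⟩ with hf
  have hinj : Function.Injective f := by
    intro i j hij
    by_contra hne
    rcases Nat.lt_or_ge i.1 j.1 with h | h
    · have hij' : x ⟨i.1, by omega⟩ = x ⟨j.1, by omega⟩ := hij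
      have h1 : x ⟨i.1, by omega⟩ ∈ Bf ⟨j.1, by omega⟩ := (hlad _ _).2 (Fin.mk_lt_mk.2 h)
      have h2 : x ⟨j.1, by omega⟩ ∉ Bf ⟨j.1, by omega⟩ := fun hmem =>
        absurd ((hlad _ _).1 hmem) (lt_irrefl _)
      exact h2 (hij' ▸ h1)
    · have hlt : j.1 < i.1 := by
        rcases Nat.lt_or_ge j.1 i.1 with h' | h'
        · exact h'
        · exact absurd (Fin.ext (le_antisymm h h')).symm hne
      have hij' : x ⟨j.1, by omega⟩ = x ⟨i.1, by omega⟩ := hij.symm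
      have h1 : x ⟨j.1, by omega⟩ ∈ Bf ⟨i.1, by omega⟩ := (hlad _ _).2 (Fin.mk_lt_mk.2 hlt)
      have h2 : x ⟨i.1, by omega⟩ ∉ Bf ⟨i.1, by omega⟩ := fun hmem =>
        absurd ((hlad _ _).1 hmem) (lt_irrefl _)
      exact h2 (hij' ▸ h1)
  have hmem : ∀ i, f i ∈ S₀ ∪ S₁ := by
    intro i
    have h1 : f i ∈ Bf ⟨2 * m + 1, by omega⟩ := (hlad _ _).2 (Fin.mk_lt_mk.2 i.2)
    have h0 : f i ∉ Bf ⟨0, by omega⟩ := fun hmem => by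
      have := (hlad _ _).1 hmem
      simp [Fin.lt_def] at this
    rw [hC₁, Set.mem_symmDiff] at h1
    rw [hC₀, Set.mem_symmDiff] at h0
    rcases h1 with ⟨hs, hb⟩ | ⟨hb, hs⟩
    · exact Or.inr hs
    · left
      by_contra hS
      exact h0 (Or.inr ⟨hb, hS⟩)
  have hsub : Set.range f ⊆ S₀ ∪ S₁ := by
    rintro _ ⟨i, rfl⟩; exact hmem i
  have hcard : (Set.range f).encard = (2 * m + 1 : ℕ) := by
    rw [← Set.image_univ, hinj.encard_image, Set.encard_univ]
    simp
  have hle : ((2 * m + 1 : ℕ) : ℕ∞) ≤ (m : ℕ∞) + (m : ℕ∞) := by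
    calc ((2 * m + 1 : ℕ) : ℕ∞) = (Set.range f).encard := hcard.symm
      _ ≤ (S₀ ∪ S₁).encard := Set.encard_mono hsub
      _ ≤ S₀.encard + S₁.encard := Set.encard_union_le _ _
      _ ≤ (m : ℕ∞) + (m : ℕ∞) := add_le_add hS₀ hS₁
  have : (2 * m + 1 : ℕ) ≤ m + m := by exact_mod_cast hle
  omega
end
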